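/- arXiv:2401.16207 — 4 statements merged into one kernel-verified Lean document; each statement's English description precedes it below -/
import Mathlib

section
/- As n → ∞, 2^n (3n−3)! / ((2n)! ((n−1)!)^3) is asymptotically equivalent to (√3/4) · (1/(π^{3/2} 3^3)) · 3^{3n} e^{2n} / (2^n n^{2n+3/2}). -/
/-!
Write `k! = s(k) √(2k) (k/e)^k`, where `s = stirlingSeq` tends to `√π` (Stirling's formula).
After the shift `n = m + 1`, the powers of `m`, `m + 1`, `2`, `3` and `e` in the Stirling
approximations of `(3m)!`, `(2m+2)!` and `(m!)^3` cancel exactly against the proposed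
equivalent, leaving the ratio `√π^3 s(3m) / (s(2m+2) s(m)^3) · (m+1)/m`, which tends to
`√π^3 √π / (√π √π^3) = 1`.
-/

open Filter Real Stirling Nat Topology

lemma Stirling.factorial_eq_stirlingSeq_mul {n : ℕ} (hn : n ≠ 0) :
    (n ! : ℝ) = stirlingSeq n * (√(2 * n) * (n / exp 1) ^ n) := by
  have : √(2 * n) * (n / exp 1) ^ n ≠ 0 := by positivity
  rw [stirlingSeq, div_mul_cancel₀ _ this]

lemma Real.rpow_natCast_add_half {x : ℝ} (hx : 0 ≤ x) (k : ℕ) :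
    x ^ ((k : ℝ) + 1 / 2) = x ^ k * √x := by
  rw [rpow_add' hx (by positivity), rpow_natCast, sqrt_eq_rpow]

lemma valtr_ratio_succ_eq {m : ℕ} (hm : m ≠ 0) :
    ((2 : ℝ) ^ (m + 1) * (Nat.factorial (3 * (m + 1) - 3)) /
        ((Nat.factorial (2 * (m + 1))) * ((Nat.factorial (m + 1 - 1)) : ℝ) ^ 3)) /
      ((Real.sqrt 3 / 4) * (1 / (Real.pi ^ ((3 : ℝ) / 2) * 3 ^ 3)) *
        ((3 : ℝ) ^ (3 * (m + 1)) * Real.exp 1 ^ (2 * (m + 1)) /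
          ((2 : ℝ) ^ (m + 1) * ((m + 1 : ℕ) : ℝ) ^ (2 * ((m + 1 : ℕ) : ℝ) + 3 / 2))))
    = √π ^ 3 * stirlingSeq (3 * m) / (stirlingSeq (2 * m + 2) * stirlingSeq m ^ 3) *
        ((m + 1) / m) := by
  have hpi : π ^ ((3 : ℝ) / 2) = √π ^ 3 := by
    rw [rpow_div_two_eq_sqrt 3 pi_pos.le, rpow_ofNat]
  have hexp : 2 * ((m + 1 : ℕ) : ℝ) + 3 / 2 = ((2 * m + 3 : ℕ) : ℝ) + 1 / 2 := by
    push_cast; ring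
  rw [show 3 * (m + 1) - 3 = 3 * m by omega, show 2 * (m + 1) = 2 * m + 2 by ring,
    Nat.add_sub_cancel, hpi, hexp, rpow_natCast_add_half (by positivity),
    factorial_eq_stirlingSeq_mul (by positivity : 3 * m ≠ 0),
    factorial_eq_stirlingSeq_mul (by positivity : 2 * m + 2 ≠ 0), factorial_eq_stirlingSeq_mul hm]
  push_cast
  have h3m : √(2 * (3 * m : ℝ)) = √3 * √(2 * m) := by
    rw [← sqrt_mul (by norm_num)]; ring_nf
  have h2m : √(2 * (2 * m + 2 : ℝ)) = 2 * √(m + 1) := by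
    rw [show (2 : ℝ) * (2 * m + 2) = 2 ^ 2 * (m + 1) by ring, sqrt_mul (by norm_num),
      sqrt_sq (by norm_num)]
  have hcube : √(2 * m : ℝ) ^ 3 = 2 * m * √(2 * m) := by
    rw [pow_succ, sq_sqrt (by positivity)]
  rw [h3m, h2m, show (2 * m + 2 : ℝ) = 2 * (m + 1) by ring]
  simp only [div_pow, mul_pow, ← pow_mul, hcube]
  field_simp
  ring

lemma tendsto_stirlingSeq_ratio :
    Tendsto (fun m : ℕ => √π ^ 3 * stirlingSeq (3 * m) /
      (stirlingSeq (2 * m + 2) * stirlingSeq m ^ 3) * ((m + 1) / m)) atTop (𝓝 1) := by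
  have hs := tendsto_stirlingSeq_sqrt_pi
  have hs3 : Tendsto (fun m : ℕ => stirlingSeq (3 * m)) atTop (𝓝 √π) :=
    hs.comp (tendsto_atTop_mono (fun m => (by omega : m ≤ 3 * m)) tendsto_id)
  have hs2 : Tendsto (fun m : ℕ => stirlingSeq (2 * m + 2)) atTop (𝓝 √π) :=
    hs.comp (tendsto_atTop_mono (fun m => (by omega : m ≤ 2 * m + 2)) tendsto_id)
  have hq : Tendsto (fun m : ℕ => ((m : ℝ) + 1) / m) atTop (𝓝 1) := by
    simpa using (tendsto_natCast_div_add_atTop (1 : ℝ)).inv₀ one_ne_zero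
  have hsqrt : √π ≠ 0 := by positivity
  have h := (((tendsto_const_nhds (x := √π ^ 3)).mul hs3).div (hs2.mul (hs.pow 3))
    (by positivity)).mul hq
  rwa [show √π ^ 3 * √π / (√π * √π ^ 3) * 1 = 1 by field_simp] at h

/-- Asymptotics of Valtr's triangle formula:
`2^n (3n-3)!/((2n)!((n-1)!)^3) ~ (√3/4)·(1/(π^{3/2} 3^3))·3^{3n} e^{2n}/(2^n n^{2n+3/2})`. -/
theorem valtr_triangle_asymptotics :
    Tendsto (fun n : ℕ =>
      ((2 : ℝ) ^ n * (Nat.factorial (3 * n - 3)) /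
        ((Nat.factorial (2 * n)) * ((Nat.factorial (n - 1)) : ℝ) ^ 3)) /
      ((Real.sqrt 3 / 4) * (1 / (Real.pi ^ ((3 : ℝ) / 2) * 3 ^ 3)) *
        ((3 : ℝ) ^ (3 * n) * Real.exp 1 ^ (2 * n) /
          ((2 : ℝ) ^ n * (n : ℝ) ^ (2 * (n : ℝ) + 3 / 2)))))
      atTop (nhds 1) := by
  rw [← tendsto_add_atTop_iff_nat 1]
  refine tendsto_stirlingSeq_ratio.congr' ?_
  filter_upwards [eventually_ne_atTop 0] with m hm
  exact (valtr_ratio_succ_eq hm).symm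
end

section
/- The sum over all quadruples (h,i,j,k) of nonnegative integers with h+i+j+k = n and h+i ≥ 1, i+j ≥ 1, j+k ≥ 1, k+h ≥ 1 of the product 1/(h!(h+i−1)!) · 1/(i!(i+j−1)!) · 1/(j!(j+k−1)!) · 1/(k!(h+k−1)!) equals (1/(n!((n−2)!)^2)) · C(2n−2, n−1)^2, for all n ≥ 3. -/
/-!
Multiplied by `n! ((n-2)!)²`, the term of `(h,i,j,k)` becomes the multinomial coefficient
`n!/(h! i! j! k!)` times `C(n-2, a-1) C(n-2, b-1)` with `a = h+i`, `b = i+j`; the four boundary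
conditions are exactly what keeps these two binomials from vanishing. Summing the multinomial
coefficients over the quadruples with given `a` and `b` gives `C(n,a) C(n,b)` (Vandermonde), so the
sum factorizes as the square of `∑ₐ C(n,a) C(n-2,a-1) = C(2n-2, n-1)`.
-/

open Nat Finset

section
variable {M : Type*} [AddCommMonoid M]

theorem sum_range_ite_add_eq (m n : ℕ) (y : M) (hy : n < m → y = 0) :
    ∑ k ∈ range (n + 1), (if m + k = n then y else 0) = y := by
  rcases le_or_gt m n with hmn | hnm
  · rw [sum_eq_single_of_mem (n - m) (by simp) fun k _ hk => if_neg (by omega)]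
    exact if_pos (by omega)
  · simp [hy hnm]

theorem sum_range_sum_range_eq_sum_range_sum_range_sub (N : ℕ) (F : ℕ → ℕ → M)
    (hF : ∀ i j, N < i + j → F i j = 0) :
    ∑ i ∈ range (N + 1), ∑ j ∈ range (N + 1), F i j =
      ∑ m ∈ range (N + 1), ∑ k ∈ range (m + 1), F k (m - k) := by
  rw [sum_range_diag_flip]
  refine sum_congr rfl fun i hi => (sum_subset (range_subset_range.2 (by omega)) ?_).symm
  intro j hj hj'
  simp only [mem_range] at hi hj hj'
  exact hF i j (by omega)

end

variable {R : Type*} [CommSemiring R]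

theorem sum_range_choose_mul_of_le {q N : ℕ} (hqN : q ≤ N) (x : ℕ → R) :
    ∑ j ∈ range (N + 1), (q.choose j : R) * x j =
      ∑ j ∈ range (q + 1), (q.choose j : R) * x j :=
  (sum_subset (range_subset_range.2 (by omega)) fun j _ hj => by
    rw [choose_eq_zero_of_lt (by simpa using hj), Nat.cast_zero, zero_mul]).symm

theorem sum_choose_mul_choose_mul_add (p q : ℕ) (g : ℕ → R) :
    ∑ i ∈ range (p + 1), ∑ j ∈ range (q + 1), (p.choose i * q.choose j : R) * g (i + j) =
      ∑ m ∈ range (p + q + 1), ((p + q).choose m : R) * g m := by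
  have extend :
      ∑ i ∈ range (p + 1), ∑ j ∈ range (q + 1), (p.choose i * q.choose j : R) * g (i + j) =
        ∑ i ∈ range (p + q + 1), ∑ j ∈ range (p + q + 1),
          (p.choose i * q.choose j : R) * g (i + j) := by
    simp only [mul_assoc, ← mul_sum]
    rw [sum_range_choose_mul_of_le (by omega : p ≤ p + q)]
    refine sum_congr rfl fun i _ => ?_
    rw [sum_range_choose_mul_of_le (by omega : q ≤ p + q)]
  rw [extend, sum_range_sum_range_eq_sum_range_sum_range_sub]
  · refine sum_congr rfl fun m hm => ?_
    rw [Nat.add_choose_eq,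
      Nat.sum_antidiagonal_eq_sum_range_succ (fun i j => p.choose i * q.choose j), Nat.cast_sum,
      sum_mul]
    refine sum_congr rfl fun k hk => ?_
    rw [Nat.add_sub_of_le (by simpa [Nat.lt_succ_iff] using hk), Nat.cast_mul]
  · intro i j hij
    rcases lt_or_ge p i with hi | hi
    · simp [choose_eq_zero_of_lt hi]
    · simp [choose_eq_zero_of_lt (by omega : q < j)]

-- Unlike `m.choose (a - 1)`, this vanishes at `a = 0`.
def predChoose (m a : ℕ) : ℕ := if a = 0 then 0 else m.choose (a - 1)

theorem predChoose_eq_zero_of_lt {m a : ℕ} (h : m + 1 < a) : predChoose m a = 0 := by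
  rw [predChoose, if_neg (by omega), choose_eq_zero_of_lt (by omega)]

theorem sum_choose_mul_predChoose (p r : ℕ) :
    ∑ a ∈ range (p + 2), (p + 1).choose a * predChoose r a = (p + 1 + r).choose p := by
  simp only [sum_range_succ' _ (p + 1), predChoose, add_eq_zero, one_ne_zero, and_false,
    if_false, if_true, add_tsub_cancel_right, mul_zero, add_zero]
  rw [Nat.add_choose_eq,
    Nat.sum_antidiagonal_eq_sum_range_succ (fun x y => (p + 1).choose x * r.choose y),
    ← sum_range_reflect]
  refine sum_congr rfl fun a ha => ?_
  have ha : a ≤ p := by simpa [Nat.lt_succ_iff] using ha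
  rw [show p + 1 - 1 - a = p - a by omega,
    Nat.choose_symm_of_eq_add (by omega : p + 1 = p - a + 1 + a)]

theorem sum_quadruples_choose_mul (n : ℕ) (f g : ℕ → R) :
    ∑ h ∈ range (n + 1), ∑ i ∈ range (n + 1), ∑ j ∈ range (n + 1), ∑ k ∈ range (n + 1),
      (if h + i + j + k = n then
        (n.choose (h + i) * (h + i).choose i * (n - (h + i)).choose j : R) * f (h + i) * g (i + j)
      else 0) =
      (∑ a ∈ range (n + 1), (n.choose a : R) * f a) *
        ∑ b ∈ range (n + 1), (n.choose b : R) * g b := by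
  have collapse_k : ∀ h i j, ∑ k ∈ range (n + 1), (if h + i + j + k = n then
      (n.choose (h + i) * (h + i).choose i * (n - (h + i)).choose j : R) * f (h + i) * g (i + j)
      else 0) =
      (n.choose (h + i) * (h + i).choose i : R) * f (h + i) *
        ((n - (h + i)).choose j * g (i + j)) := by
    intro h i j
    rw [sum_range_ite_add_eq]
    · ring
    · intro hn
      rcases lt_or_ge n (h + i) with hhi | hhi
      · simp [choose_eq_zero_of_lt hhi]
      · simp [choose_eq_zero_of_lt (by omega : n - (h + i) < j)]
  simp only [collapse_k, ← mul_sum]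
  rw [sum_comm, sum_range_sum_range_eq_sum_range_sum_range_sub n
    (fun i h => (n.choose (h + i) * (h + i).choose i : R) * f (h + i) *
      ∑ j ∈ range (n + 1), (n - (h + i)).choose j * g (i + j))]
  · rw [sum_mul]
    refine sum_congr rfl fun a ha => ?_
    have ha : a ≤ n := by simpa [Nat.lt_succ_iff] using ha
    have inner : ∀ i ∈ range (a + 1), (n.choose (a - i + i) * (a - i + i).choose i : R) *
        f (a - i + i) * ∑ j ∈ range (n + 1), (n - (a - i + i)).choose j * g (i + j) =
        n.choose a * f a *
          ∑ j ∈ range (n - a + 1), (a.choose i * (n - a).choose j : R) * g (i + j) := by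
      intro i hi
      rw [Nat.sub_add_cancel (by simpa [Nat.lt_succ_iff] using hi),
        sum_range_choose_mul_of_le (by omega : n - a ≤ n), mul_sum, mul_sum]
      refine sum_congr rfl fun j _ => by ring
    rw [sum_congr rfl inner, ← mul_sum, sum_choose_mul_choose_mul_add, Nat.add_sub_of_le ha]
  · intro i h hn
    simp [choose_eq_zero_of_lt (by omega : n < h + i)]

theorem quadruple_term_eq (n h i j k : ℕ) (hsum : h + i + j + k = n) (hhi : 1 ≤ h + i)
    (hij : 1 ≤ i + j) (hjk : 1 ≤ j + k) (hkh : 1 ≤ k + h) :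
    (1 : ℝ) / (h ! * (h + i - 1)!) * (1 / (i ! * (i + j - 1)!)) *
        (1 / (j ! * (j + k - 1)!)) * (1 / (k ! * (h + k - 1)!)) =
      1 / ((n ! : ℝ) * ((n - 2)! : ℝ) ^ 2) *
        ((n.choose (h + i) * (h + i).choose i * (n - (h + i)).choose j : ℝ) *
          (n - 2).choose (h + i - 1) * (n - 2).choose (i + j - 1)) := by
  rw [cast_choose ℝ (by omega : h + i ≤ n), cast_choose ℝ (by omega : i ≤ h + i),
    cast_choose ℝ (by omega : j ≤ n - (h + i)), cast_choose ℝ (by omega : h + i - 1 ≤ n - 2),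
    cast_choose ℝ (by omega : i + j - 1 ≤ n - 2), show n - (h + i) = j + k by omega,
    show h + i - i = h by omega, show j + k - j = k by omega,
    show n - 2 - (h + i - 1) = j + k - 1 by omega, show n - 2 - (i + j - 1) = h + k - 1 by omega]
  field_simp

theorem quadruple_summand_eq (n h i j k : ℕ) (hn : 2 ≤ n) :
    (if h + i + j + k = n ∧ 1 ≤ h + i ∧ 1 ≤ i + j ∧ 1 ≤ j + k ∧ 1 ≤ k + h then
      (1 : ℝ) / (h ! * (h + i - 1)!) * (1 / (i ! * (i + j - 1)!)) *
        (1 / (j ! * (j + k - 1)!)) * (1 / (k ! * (h + k - 1)!))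
    else 0) =
      1 / ((n ! : ℝ) * ((n - 2)! : ℝ) ^ 2) *
        (if h + i + j + k = n then
          (n.choose (h + i) * (h + i).choose i * (n - (h + i)).choose j : ℝ) *
            predChoose (n - 2) (h + i) * predChoose (n - 2) (i + j)
        else 0) := by
  by_cases hsum : h + i + j + k = n
  · rw [if_pos hsum]
    by_cases hpos : 1 ≤ h + i ∧ 1 ≤ i + j ∧ 1 ≤ j + k ∧ 1 ≤ k + h
    · obtain ⟨hhi, hij, hjk, hkh⟩ := hpos
      rw [if_pos ⟨hsum, hhi, hij, hjk, hkh⟩, quadruple_term_eq n h i j k hsum hhi hij hjk hkh,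
        predChoose, predChoose, if_neg (by omega), if_neg (by omega)]
    · rw [if_neg fun h => hpos h.2]
      -- `j + k = 0` forces `h + i = n`, and `k + h = 0` forces `i + j = n`.
      have : predChoose (n - 2) (h + i) = 0 ∨ predChoose (n - 2) (i + j) = 0 := by
        by_cases hhi : h + i = 0
        · simp [predChoose, hhi]
        by_cases hij : i + j = 0
        · simp [predChoose, hij]
        by_cases hjk : j + k = 0
        · exact .inl (predChoose_eq_zero_of_lt (by omega))
        · exact .inr (predChoose_eq_zero_of_lt (by omega))
      rcases this with h0 | h0 <;> simp [h0]
  · rw [if_neg fun h => hsum h.1, if_neg hsum, mul_zero]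

/-- The combinatorial identity for the square case: summing over all size-vectors
`(h,i,j,k)` with `h+i+j+k = n` and `h+i, i+j, j+k, k+h ≥ 1`,
`∑ 1/(h!(h+i-1)!) · 1/(i!(i+j-1)!) · 1/(j!(j+k-1)!) · 1/(k!(h+k-1)!)
  = (1/(n!((n-2)!)^2)) · C(2n-2,n-1)^2`. -/
theorem sum_quadruples_eq (n : ℕ) (hn : 3 ≤ n) :
    (∑ h ∈ Finset.range (n + 1), ∑ i ∈ Finset.range (n + 1),
      ∑ j ∈ Finset.range (n + 1), ∑ k ∈ Finset.range (n + 1),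
        if h + i + j + k = n ∧ 1 ≤ h + i ∧ 1 ≤ i + j ∧ 1 ≤ j + k ∧ 1 ≤ k + h then
          (1 : ℝ) / (h ! * (h + i - 1)!) * (1 / (i ! * (i + j - 1)!)) *
            (1 / (j ! * (j + k - 1)!)) * (1 / (k ! * (h + k - 1)!))
        else 0) =
      (1 / ((n ! : ℝ) * ((n - 2)! : ℝ) ^ 2)) * ((2 * n - 2).choose (n - 1) : ℝ) ^ 2 := by
  have central : ∑ a ∈ range (n + 1), (n.choose a : ℝ) * predChoose (n - 2) a =
      (2 * n - 2).choose (n - 1) := by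
    have h := sum_choose_mul_predChoose (n - 1) (n - 2)
    rw [show n - 1 + 2 = n + 1 by omega, show n - 1 + 1 = n by omega,
      show n + (n - 2) = 2 * n - 2 by omega] at h
    exact_mod_cast h
  simp only [quadruple_summand_eq _ _ _ _ _ (by omega : 2 ≤ n), ← mul_sum]
  rw [← central]
  exact congrArg _ ((sum_quadruples_choose_mul n (fun a => (predChoose (n - 2) a : ℝ))
    (fun a => (predChoose (n - 2) a : ℝ))).trans (sq _).symm)
end

section
/- Let Y_n be a Poisson random variable with mean n/κ, for a fixed integer κ ≥ 1. Then sup over y of | √(n/κ) · P(Y_n = ⌊n/κ + y√(n/κ)⌋) − e^{−y²/2}/√(2π) | tends to 0 as n → ∞. -/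
open Filter

/-!
Stirling's formula in the form `k! = stirlingSeq k · √(2k) (k/e)^k` gives exactly
`√λ · P(Y = k) = φ(x) · (√π / stirlingSeq k) · √(λ / k) · exp(-λ ρ(t))` with `x = (k - λ)/√λ`,
`t = (k - λ)/λ`, `φ` the standard Gaussian density and `ρ(t) = O(t³)` (`cramerRemainder`).
In the window `|k - λ| ≤ 3 λ^{3/5}` the three correction factors tend to `1` uniformly. Outside
it the masses decrease away from `λ`, so they are dominated by the mass at the edge of the window,
where `φ(x) ≤ exp(-λ^{1/5}/2)`. Finally `⌊λ + y√λ⌋` is within `1/√λ` of `y` on the `x`-scale and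
`φ` is `1`-Lipschitz. Writing `λ = s¹⁰` keeps every exponent integral.
-/

open Real
open scoped Nat

noncomputable def gaussDensity (x : ℝ) : ℝ := exp (-x ^ 2 / 2) / √(2 * π)

lemma one_le_sqrt_two_mul_pi : 1 ≤ √(2 * π) :=
  one_le_sqrt.mpr (by linarith [pi_gt_three])

lemma gaussDensity_pos (x : ℝ) : 0 < gaussDensity x := by
  unfold gaussDensity; positivity

lemma gaussDensity_le_exp_neg_sq {a x : ℝ} (ha : 0 ≤ a) (hax : a ≤ |x|) :
    gaussDensity x ≤ exp (-a ^ 2 / 2) := by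
  have hsq : a ^ 2 ≤ x ^ 2 := by simpa only [sq_abs] using pow_le_pow_left₀ ha hax 2
  calc gaussDensity x ≤ exp (-x ^ 2 / 2) := div_le_self (exp_pos _).le one_le_sqrt_two_mul_pi
    _ ≤ exp (-a ^ 2 / 2) := exp_le_exp.mpr (by linarith)

lemma gaussDensity_le_one (x : ℝ) : gaussDensity x ≤ 1 := by
  simpa using gaussDensity_le_exp_neg_sq le_rfl (abs_nonneg x)

lemma abs_mul_exp_neg_sq_div_two_le_one (x : ℝ) : |x * exp (-x ^ 2 / 2)| ≤ 1 := by
  have hx : |x| ≤ exp (x ^ 2 / 2) := by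
    nlinarith [add_one_le_exp (x ^ 2 / 2), sq_abs x, sq_nonneg (|x| - 1)]
  rw [abs_mul, abs_of_pos (exp_pos _), neg_div, exp_neg, ← div_eq_mul_inv]
  exact div_le_one_of_le₀ hx (exp_pos _).le

lemma hasDerivAt_gaussDensity (x : ℝ) :
    HasDerivAt gaussDensity (-(x * exp (-x ^ 2 / 2)) / √(2 * π)) x := by
  refine (((hasDerivAt_pow 2 x).fun_neg.div_const 2).exp.div_const (√(2 * π))).congr_deriv ?_
  push_cast
  ring

lemma abs_gaussDensity_sub_le (x y : ℝ) :
    |gaussDensity x - gaussDensity y| ≤ |x - y| := by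
  have hlip : LipschitzWith 1 gaussDensity := by
    refine lipschitzWith_of_nnnorm_deriv_le (fun x => (hasDerivAt_gaussDensity x).differentiableAt)
      fun x => ?_
    rw [← NNReal.coe_le_coe, coe_nnnorm, (hasDerivAt_gaussDensity x).deriv, norm_eq_abs,
      abs_div, abs_neg, abs_of_pos (by positivity : (0 : ℝ) < √(2 * π)), NNReal.coe_one]
    exact div_le_one_of_le₀ ((abs_mul_exp_neg_sq_div_two_le_one x).trans one_le_sqrt_two_mul_pi)
      (by positivity)
  simpa [dist_eq_norm] using hlip.dist_le_mul x y

noncomputable def poissonMass (r : ℝ) (k : ℕ) : ℝ := exp (-r) * r ^ k / k !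

lemma poissonMass_nonneg {r : ℝ} (hr : 0 ≤ r) (k : ℕ) : 0 ≤ poissonMass r k := by
  unfold poissonMass; positivity

lemma poissonMass_succ (r : ℝ) (k : ℕ) :
    poissonMass r (k + 1) = poissonMass r k * (r / (k + 1)) := by
  simp only [poissonMass, Nat.factorial_succ, Nat.cast_mul, Nat.cast_succ]
  field_simp
  ring

lemma poissonMass_le_of_le_of_le {r : ℝ} (hr : 0 ≤ r) {a b : ℕ} (hab : a ≤ b) (hb : b ≤ r) :
    poissonMass r a ≤ poissonMass r b := by
  induction b, hab using Nat.le_induction with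
  | base => rfl
  | succ n _ ih =>
    push_cast at hb
    rw [poissonMass_succ]
    refine (ih (by linarith)).trans (le_mul_of_one_le_right (poissonMass_nonneg hr n) ?_)
    rw [one_le_div (by positivity)]
    exact hb

lemma poissonMass_le_of_le_of_ge {r : ℝ} (hr : 0 ≤ r) {a b : ℕ} (hab : a ≤ b) (ha : r ≤ a) :
    poissonMass r b ≤ poissonMass r a := by
  induction b, hab using Nat.le_induction with
  | base => rfl
  | succ n han ih =>
    have hn : r ≤ n + 1 := by linarith [show (a : ℝ) ≤ n by exact_mod_cast han]
    rw [poissonMass_succ]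
    refine (mul_le_of_le_one_right (poissonMass_nonneg hr n) ?_).trans ih
    rw [div_le_one (by positivity)]
    exact hn

lemma exists_poissonMass_le {r d : ℝ} (hr : 0 ≤ r) (hd : 1 ≤ d) {k : ℕ} (hk : d ≤ |k - r|) :
    ∃ j : ℕ, d - 1 ≤ |j - r| ∧ |j - r| ≤ d ∧ poissonMass r k ≤ poissonMass r j := by
  rcases le_abs'.mp hk with hleft | hright
  · have hrd : 0 ≤ r - d := by linarith [(k.cast_nonneg : (0 : ℝ) ≤ k)]
    have hj₁ := Nat.le_ceil (r - d)
    have hj₂ := Nat.ceil_lt_add_one hrd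
    refine ⟨⌈r - d⌉₊, ?_, ?_, poissonMass_le_of_le_of_le hr ?_ (by linarith)⟩
    · rw [abs_sub_comm]; exact (by linarith : d - 1 ≤ r - _).trans (le_abs_self _)
    · rw [abs_le]; constructor <;> linarith
    · exact_mod_cast (by linarith : (k : ℝ) ≤ ⌈r - d⌉₊)
  · have hj₁ := Nat.floor_le (by linarith : 0 ≤ r + d)
    have hj₂ := Nat.lt_floor_add_one (r + d)
    refine ⟨⌊r + d⌋₊, ?_, ?_, poissonMass_le_of_le_of_ge hr ?_ (by linarith)⟩
    · exact (by linarith : d - 1 ≤ _ - r).trans (le_abs_self _)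
    · rw [abs_le]; constructor <;> linarith
    · exact Nat.floor_le_of_le (by linarith)

/-- `(1 + t) log (1 + t) - t` is the Cramér rate function of the Poisson law (in the relative
deviation `t`); this is its remainder after the quadratic term. -/
noncomputable def cramerRemainder (t : ℝ) : ℝ := (1 + t) * log (1 + t) - t - t ^ 2 / 2

lemma abs_cramerRemainder_le {t : ℝ} (ht : |t| ≤ 1 / 2) :
    |cramerRemainder t| ≤ 7 / 2 * |t| ^ 3 := by
  have hlog : |log (1 + t) - t + t ^ 2 / 2| ≤ 2 * |t| ^ 3 := by
    have h := abs_log_sub_add_sum_range_le (show |-t| < 1 by rw [abs_neg]; linarith) 2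
    norm_num [Finset.sum_range_succ] at h
    calc |log (1 + t) - t + t ^ 2 / 2| = |-t + t ^ 2 / 2 + log (1 + t)| := by ring_nf
      _ ≤ |t| ^ 3 / (1 - |t|) := h
      _ ≤ 2 * |t| ^ 3 := by
          rw [div_le_iff₀ (by linarith)]
          nlinarith [pow_nonneg (abs_nonneg t) 3]
  have h1t : |1 + t| ≤ 3 / 2 := by rw [abs_le] at ht ⊢; constructor <;> linarith
  calc |cramerRemainder t| = |(1 + t) * (log (1 + t) - t + t ^ 2 / 2) - t ^ 3 / 2| := by
        rw [cramerRemainder]; ring_nf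
    _ ≤ |1 + t| * |log (1 + t) - t + t ^ 2 / 2| + |t| ^ 3 / 2 := by
        rw [← abs_mul, ← abs_pow, ← abs_two, ← abs_div, abs_two]
        exact abs_sub _ _
    _ ≤ 3 / 2 * (2 * |t| ^ 3) + |t| ^ 3 / 2 := by gcongr
    _ = 7 / 2 * |t| ^ 3 := by ring

lemma sqrt_mul_poissonMass_eq {r : ℝ} (hr : 0 < r) {k : ℕ} (hk : k ≠ 0) :
    √r * poissonMass r k = gaussDensity ((k - r) / √r) *
      (√π / Stirling.stirlingSeq k * √(r / k) * exp (-(r * cramerRemainder ((k - r) / r)))) := by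
  have hk0 : (0 : ℝ) < k := by positivity
  have hexp : -((k - r) / √r) ^ 2 / 2 + -(r * cramerRemainder ((k - r) / r))
      = k - r - k * log (k / r) := by
    rw [cramerRemainder, show 1 + (k - r) / r = k / r by field_simp; ring, div_pow,
      sq_sqrt hr.le]
    field_simp
    ring
  have hpow : exp (k * log (k / r)) = (k / r) ^ k := by
    rw [← Real.log_pow, exp_log (by positivity)]
  have hek : exp 1 ^ k = exp k := by rw [← exp_nat_mul, mul_one]
  calc √r * poissonMass r k
      = √r * exp (k - r - k * log (k / r)) * (k / exp 1) ^ k / k ! := by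
        rw [exp_sub, exp_sub, hpow, div_pow, div_pow, hek, poissonMass, exp_neg]
        field_simp
    _ = _ := by
        rw [← hexp, exp_add, gaussDensity, Stirling.stirlingSeq, sqrt_mul zero_le_two,
          sqrt_mul zero_le_two, sqrt_div' _ hk0.le]
        field_simp

lemma sqrt_pi_div_stirlingSeq_le_one {k : ℕ} (hk : k ≠ 0) : √π / Stirling.stirlingSeq k ≤ 1 :=
  div_le_one_of_le₀ (Stirling.sqrt_pi_le_stirlingSeq hk)
    ((sqrt_nonneg π).trans (Stirling.sqrt_pi_le_stirlingSeq hk))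

lemma sqrt_pi_div_stirlingSeq_le_of_le {m k : ℕ} (hm : m ≠ 0) (hmk : m ≤ k) :
    √π / Stirling.stirlingSeq m ≤ √π / Stirling.stirlingSeq k := by
  obtain ⟨a, rfl⟩ := Nat.exists_eq_succ_of_ne_zero hm
  obtain ⟨b, rfl⟩ := Nat.exists_eq_succ_of_ne_zero (by omega : k ≠ 0)
  exact div_le_div_of_nonneg_left (by positivity) (Stirling.stirlingSeq'_pos b)
    (Stirling.stirlingSeq'_antitone (Nat.succ_le_succ_iff.mp hmk))

lemma abs_sqrt_sub_one_le {a : ℝ} (ha : 0 ≤ a) : |√a - 1| ≤ |a - 1| :=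
  calc |√a - 1| ≤ |√a - 1| * (√a + 1) := le_mul_of_one_le_right (abs_nonneg _) (by simp)
    _ = |a - 1| := by
      rw [← abs_of_nonneg (by positivity : 0 ≤ √a + 1), ← abs_mul]
      congr 1
      linear_combination sq_sqrt ha

lemma abs_mul_mul_sub_one_le {P Q R : ℝ} (hP : P ≤ 1) (hQ : 0 ≤ Q) (hR : 0 ≤ R) :
    |P * Q * R - 1| ≤ (1 - P) * Q * R + |Q - 1| * R + |R - 1| := by
  have h0 : 0 ≤ (1 - P) * Q * R := by have := sub_nonneg.mpr hP; positivity
  calc |P * Q * R - 1| = |-((1 - P) * Q * R) + (Q - 1) * R + (R - 1)| := by ring_nf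
    _ ≤ |-((1 - P) * Q * R)| + |(Q - 1) * R| + |R - 1| := abs_add_three _ _ _
    _ = (1 - P) * Q * R + |Q - 1| * R + |R - 1| := by
      rw [abs_neg, abs_of_nonneg h0, abs_mul, abs_of_nonneg hR]

lemma abs_sqrt_div_sub_one_le {r w x : ℝ} (hr : 0 < r) (hx : r / 2 ≤ x) (hxr : |x - r| ≤ w) :
    |√(r / x) - 1| ≤ 2 * w / r := by
  have hx0 : 0 < x := by linarith
  refine (abs_sqrt_sub_one_le (by positivity)).trans ?_
  rw [div_sub_one hx0.ne', abs_div, abs_sub_comm, abs_of_pos hx0, div_le_div_iff₀ hx0 hr]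
  nlinarith [abs_nonneg (x - r)]

lemma abs_exp_neg_mul_cramerRemainder_sub_one_le {r t : ℝ} (hr : 0 ≤ r) (ht : |t| ≤ 1 / 2)
    (hrt : 7 * (r * |t| ^ 3) ≤ 2) :
    |exp (-(r * cramerRemainder t)) - 1| ≤ 7 * (r * |t| ^ 3) := by
  have hE : |r * cramerRemainder t| ≤ 7 / 2 * (r * |t| ^ 3) := by
    rw [abs_mul, abs_of_nonneg hr]
    nlinarith [abs_cramerRemainder_le ht]
  calc |exp (-(r * cramerRemainder t)) - 1| ≤ 2 * |-(r * cramerRemainder t)| :=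
        abs_exp_sub_one_le (by rw [abs_neg]; linarith)
    _ ≤ 7 * (r * |t| ^ 3) := by rw [abs_neg]; linarith

theorem abs_sqrt_mul_poissonMass_sub_gaussDensity_le {r w : ℝ} {k : ℕ} (hr : 2 ≤ r)
    (hwr : w ≤ r / 2) (hw : 7 * w ^ 3 ≤ 2 * r ^ 2) (hk : |k - r| ≤ w) :
    |√r * poissonMass r k - gaussDensity ((k - r) / √r)| ≤
      6 * (1 - √π / Stirling.stirlingSeq ⌊r / 2⌋₊) + 6 * w / r + 7 * w ^ 3 / r ^ 2 := by
  have hr0 : 0 < r := by linarith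
  have hw0 : 0 ≤ 2 * w / r := div_nonneg (by linarith [(abs_nonneg _).trans hk]) hr0.le
  have hkr : r / 2 ≤ k := by linarith [(abs_le.mp hk).1]
  have hk0 : k ≠ 0 := by rintro rfl; norm_num at hkr; linarith
  have hm0 : ⌊r / 2⌋₊ ≠ 0 := (Nat.floor_pos.mpr (by linarith)).ne'
  set P := √π / Stirling.stirlingSeq k
  set Q := √(r / k)
  set R := exp (-(r * cramerRemainder ((k - r) / r)))
  have hP : √π / Stirling.stirlingSeq ⌊r / 2⌋₊ ≤ P :=
    sqrt_pi_div_stirlingSeq_le_of_le hm0 (Nat.floor_le_of_le hkr)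
  have hQ : |Q - 1| ≤ 2 * w / r := abs_sqrt_div_sub_one_le hr0 hkr hk
  have hR : |R - 1| ≤ 7 * w ^ 3 / r ^ 2 := by
    have ht : |(k - r) / r| ≤ w / r := by rw [abs_div, abs_of_pos hr0]; gcongr
    have hrt : r * |(k - r) / r| ^ 3 ≤ w ^ 3 / r ^ 2 :=
      calc r * |(k - r) / r| ^ 3 ≤ r * (w / r) ^ 3 := by gcongr
        _ = w ^ 3 / r ^ 2 := by field_simp
    have hw' : 7 * (w ^ 3 / r ^ 2) ≤ 2 := by
      rw [mul_div_assoc', div_le_iff₀ (by positivity)]; linarith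
    have hwr' : w / r ≤ 1 / 2 := by rw [div_le_iff₀ hr0]; linarith
    calc |R - 1| ≤ 7 * (r * |(k - r) / r| ^ 3) :=
          abs_exp_neg_mul_cramerRemainder_sub_one_le hr0.le (ht.trans hwr') (by linarith)
      _ ≤ 7 * w ^ 3 / r ^ 2 := by rw [mul_div_assoc]; gcongr
  have hQ2 : Q ≤ 2 := by
    have : 2 * w / r ≤ 1 := by rw [div_le_one hr0]; linarith
    linarith [(abs_le.mp hQ).2]
  have hR3 : R ≤ 3 := by
    have : 7 * w ^ 3 / r ^ 2 ≤ 2 := by rw [div_le_iff₀ (by positivity)]; linarith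
    linarith [(abs_le.mp hR).2]
  rw [sqrt_mul_poissonMass_eq hr0 hk0, ← mul_sub_one, abs_mul, abs_of_pos (gaussDensity_pos _)]
  calc gaussDensity _ * |P * Q * R - 1| ≤ 1 * ((1 - P) * Q * R + |Q - 1| * R + |R - 1|) := by
        gcongr
        · exact gaussDensity_le_one _
        · exact abs_mul_mul_sub_one_le (sqrt_pi_div_stirlingSeq_le_one hk0) (sqrt_nonneg _)
            (exp_pos _).le
    _ ≤ (1 - √π / Stirling.stirlingSeq ⌊r / 2⌋₊) * 2 * 3 + 2 * w / r * 3 + 7 * w ^ 3 / r ^ 2 := by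
        rw [one_mul]
        gcongr <;> linarith [sqrt_pi_div_stirlingSeq_le_one hm0]
    _ = _ := by ring

noncomputable def poissonLocalLimitError (s : ℝ) : ℝ :=
  6 * (1 - √π / Stirling.stirlingSeq ⌊s ^ 10 / 2⌋₊) + 18 / s ^ 4 + 189 / s ^ 2 + exp (-s ^ 2 / 2)

lemma sqrt_pow_ten {s : ℝ} (hs : 0 ≤ s) : √(s ^ 10) = s ^ 5 := by
  rw [show s ^ 10 = (s ^ 5) ^ 2 by ring, sqrt_sq (by positivity)]

theorem abs_pow_mul_poissonMass_sub_gaussDensity_le {s : ℝ} (hs : 10 ≤ s) (k : ℕ) :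
    |s ^ 5 * poissonMass (s ^ 10) k - gaussDensity ((k - s ^ 10) / s ^ 5)| ≤
      poissonLocalLimitError s := by
  have hs0 : 0 < s := by linarith
  have hs2 : 100 ≤ s ^ 2 := by nlinarith
  have hs4 : 6 ≤ s ^ 4 := by nlinarith
  have hs6 : 1 ≤ s ^ 6 := one_le_pow₀ (by linarith)
  have central : ∀ j : ℕ, |j - s ^ 10| ≤ 3 * s ^ 6 →
      |s ^ 5 * poissonMass (s ^ 10) j - gaussDensity ((j - s ^ 10) / s ^ 5)| ≤
        6 * (1 - √π / Stirling.stirlingSeq ⌊s ^ 10 / 2⌋₊) + 18 / s ^ 4 + 189 / s ^ 2 := by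
    intro j hj
    have h := abs_sqrt_mul_poissonMass_sub_gaussDensity_le (w := 3 * s ^ 6)
      (by nlinarith) (by nlinarith) (by nlinarith [pow_pos hs0 18]) hj
    rw [sqrt_pow_ten hs0.le] at h
    convert h using 2 <;> field_simp <;> ring
  have far : ∀ j : ℕ, 3 * s ^ 6 - 1 ≤ |j - s ^ 10| →
      gaussDensity ((j - s ^ 10) / s ^ 5) ≤ exp (-s ^ 2 / 2) := by
    intro j hj
    refine gaussDensity_le_exp_neg_sq hs0.le ?_
    rw [abs_div, abs_of_pos (by positivity : (0 : ℝ) < s ^ 5), le_div_iff₀ (by positivity)]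
    linarith
  by_cases hk : |k - s ^ 10| ≤ 3 * s ^ 6
  · exact (central k hk).trans (le_add_of_nonneg_right (exp_pos _).le)
  obtain ⟨j, hj₁, hj₂, hkj⟩ :=
    exists_poissonMass_le (by positivity) (by nlinarith) (le_of_not_ge hk)
  have herr := (abs_nonneg _).trans (central j hj₂)
  have hmass := poissonMass_nonneg (by positivity : 0 ≤ s ^ 10) k
  refine abs_sub_le_of_nonneg_of_le (by positivity) ?_ (gaussDensity_pos _).le
    ((far k (by linarith)).trans (le_add_of_nonneg_left herr))
  calc s ^ 5 * poissonMass (s ^ 10) k ≤ s ^ 5 * poissonMass (s ^ 10) j := by gcongr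
    _ ≤ gaussDensity ((j - s ^ 10) / s ^ 5) +
          (6 * (1 - √π / Stirling.stirlingSeq ⌊s ^ 10 / 2⌋₊) + 18 / s ^ 4 + 189 / s ^ 2) := by
        linarith [(abs_le.mp (central j hj₂)).2]
    _ ≤ poissonLocalLimitError s := by rw [poissonLocalLimitError]; linarith [far j hj₁]

theorem abs_sqrt_mul_poissonMass_floor_sub_le {r s y : ℝ} (hs : 10 ≤ s) (hr : r = s ^ 10)
    (hK : 0 ≤ ⌊r + y * √r⌋) :
    |√r * poissonMass r ⌊r + y * √r⌋.toNat - gaussDensity y| ≤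
      poissonLocalLimitError s + 1 / s ^ 5 := by
  subst hr
  rw [sqrt_pow_ten (by linarith)] at hK ⊢
  set k := ⌊s ^ 10 + y * s ^ 5⌋.toNat
  have hk : (k : ℝ) = ⌊s ^ 10 + y * s ^ 5⌋ := by exact_mod_cast Int.toNat_of_nonneg hK
  have hxy : |(k - s ^ 10) / s ^ 5 - y| ≤ 1 / s ^ 5 := by
    have h₁ := Int.floor_le (s ^ 10 + y * s ^ 5)
    have h₂ := Int.lt_floor_add_one (s ^ 10 + y * s ^ 5)
    have hs5 : (0 : ℝ) < s ^ 5 := by positivity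
    rw [show (k - s ^ 10) / s ^ 5 - y = (k - (s ^ 10 + y * s ^ 5)) / s ^ 5 by field_simp; ring,
      abs_div, abs_of_pos hs5]
    gcongr
    rw [abs_le]; constructor <;> linarith
  calc |s ^ 5 * poissonMass (s ^ 10) k - gaussDensity y|
      ≤ |s ^ 5 * poissonMass (s ^ 10) k - gaussDensity ((k - s ^ 10) / s ^ 5)| +
          |gaussDensity ((k - s ^ 10) / s ^ 5) - gaussDensity y| := abs_sub_le _ _ _
    _ ≤ poissonLocalLimitError s + 1 / s ^ 5 :=
        add_le_add (abs_pow_mul_poissonMass_sub_gaussDensity_le hs k)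
          ((abs_gaussDensity_sub_le _ _).trans hxy)

theorem gaussDensity_le_of_floor_neg {r s y : ℝ} (hs : 10 ≤ s) (hr : r = s ^ 10)
    (hK : ⌊r + y * √r⌋ < 0) : gaussDensity y ≤ poissonLocalLimitError s + 1 / s ^ 5 := by
  subst hr
  rw [sqrt_pow_ten (by linarith), Int.floor_lt, Int.cast_zero] at hK
  have hy : s ≤ |y| := by
    have : s ≤ s ^ 5 := le_self_pow₀ (by linarith) (by norm_num)
    nlinarith [neg_le_abs y, pow_pos (by linarith : (0 : ℝ) < s) 5]
  have hm : ⌊s ^ 10 / 2⌋₊ ≠ 0 :=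
    (Nat.floor_pos.mpr (by nlinarith [pow_le_pow_left₀ (by norm_num) hs 10])).ne'
  have hstirling := sqrt_pi_div_stirlingSeq_le_one hm
  have hpow : 0 ≤ 18 / s ^ 4 + 189 / s ^ 2 + 1 / s ^ 5 := by positivity
  rw [poissonLocalLimitError]
  linarith [gaussDensity_le_exp_neg_sq (by linarith) hy]

theorem tendsto_poissonLocalLimitError :
    Tendsto (fun s => poissonLocalLimitError s + 1 / s ^ 5) atTop (nhds 0) := by
  have hpow {c : ℝ} {n : ℕ} (hn : n ≠ 0) : Tendsto (fun s : ℝ => c / s ^ n) atTop (nhds 0) :=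
    tendsto_const_nhds.div_atTop (tendsto_pow_atTop hn)
  have hstirling : Tendsto (fun s : ℝ => Stirling.stirlingSeq ⌊s ^ 10 / 2⌋₊) atTop (nhds √π) :=
    Stirling.tendsto_stirlingSeq_sqrt_pi.comp
      (tendsto_nat_floor_atTop.comp ((tendsto_pow_atTop (by norm_num)).atTop_div_const two_pos))
  have hgauss : Tendsto (fun s : ℝ => exp (-s ^ 2 / 2)) atTop (nhds 0) :=
    tendsto_exp_atBot.comp
      ((tendsto_neg_atTop_atBot.comp (tendsto_pow_atTop two_ne_zero)).atBot_div_const two_pos)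
  have hsqrtπ : √π ≠ 0 := (sqrt_pos.mpr pi_pos).ne'
  have h := ((((((tendsto_const_nhds (x := √π)).div hstirling hsqrtπ).const_sub 1).const_mul 6).add
    (hpow (c := 18) four_ne_zero)).add (hpow (c := 189) two_ne_zero)).add hgauss |>.add
    (hpow (c := 1) (by norm_num : 5 ≠ 0))
  simpa [poissonLocalLimitError, div_self hsqrtπ] using h

/-- Local central limit theorem for Poisson variables: if `Y_n` is Poisson with mean
`n/κ`, then `sup_y |√(n/κ)·P(Y_n = ⌊n/κ + y√(n/κ)⌋) - e^{-y²/2}/√(2π)| → 0`. -/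
theorem poisson_local_limit (κ : ℕ) (hκ : 1 ≤ κ) :
    Tendsto (fun n : ℕ =>
      ⨆ y : ℝ,
        |Real.sqrt ((n : ℝ) / κ) *
            (if h : 0 ≤ ⌊(n : ℝ) / κ + y * Real.sqrt ((n : ℝ) / κ)⌋ then
              Real.exp (-((n : ℝ) / κ)) *
                ((n : ℝ) / κ) ^ (⌊(n : ℝ) / κ + y * Real.sqrt ((n : ℝ) / κ)⌋.toNat) /
                (Nat.factorial (⌊(n : ℝ) / κ + y * Real.sqrt ((n : ℝ) / κ)⌋.toNat))
            else 0) -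
          Real.exp (-(y ^ 2) / 2) / Real.sqrt (2 * Real.pi)|)
      atTop (nhds 0) := by
  have hs : Tendsto (fun n : ℕ => ((n : ℝ) / κ) ^ (1 / 10 : ℝ)) atTop atTop :=
    (tendsto_rpow_atTop (by norm_num)).comp
      (tendsto_natCast_atTop_atTop.atTop_div_const (Nat.cast_pos.mpr hκ))
  refine squeeze_zero' (Eventually.of_forall fun n => Real.iSup_nonneg fun y => abs_nonneg _) ?_
    (tendsto_poissonLocalLimitError.comp hs)
  filter_upwards [hs.eventually_ge_atTop 10] with n hn
  have hr : (n : ℝ) / κ = (((n : ℝ) / κ) ^ (1 / 10 : ℝ)) ^ 10 := by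
    rw [← rpow_natCast, ← rpow_mul (by positivity)]
    norm_num
  refine ciSup_le fun y => ?_
  split_ifs with hK
  · exact abs_sqrt_mul_poissonMass_floor_sub_le hn hr hK
  · rw [mul_zero, zero_sub, abs_neg]
    exact (abs_of_pos (gaussDensity_pos y)).trans_le
      (gaussDensity_le_of_floor_neg hn hr (not_le.mp hK))
end

section
/- Let ζ, ξ be independent exponential random variables with mean 1 and let t ∈ [0,∞). Then E[ζ · 1{ξ/ζ ≤ t}] = 1 − 1/(1+t)² and E[ξ · 1{ξ/ζ ≤ t}] = t²/(1+t)². -/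
/-!
Conditionally on `ζ = x > 0` the event is `{ξ ≤ t x}`, on which `ξ` has mass `1 - e^{-tx}` and
partial mean `1 - (1 + t x) e^{-tx}`. Integrating these against the law of `ζ` leaves only the
moments `E[ζ ^ n e^{-s ζ}] = n! / (1 + s) ^ (n + 1)` with `n ∈ {0, 1}` and `s ∈ {0, t}`.
-/

open MeasureTheory ProbabilityTheory Real Set
open scoped ENNReal Nat

lemma setIntegral_div_le_eq_integral_setIntegral_Iic {μ ν : Measure ℝ} [SFinite μ] [SFinite ν]
    {f : ℝ × ℝ → ℝ} (hf : Integrable f (μ.prod ν)) (hμ : ∀ᵐ x ∂μ, 0 < x) (t : ℝ) :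
    ∫ p in {p : ℝ × ℝ | p.2 / p.1 ≤ t}, f p ∂μ.prod ν =
      ∫ x, ∫ y in Iic (t * x), f (x, y) ∂ν ∂μ := by
  have hs : MeasurableSet {p : ℝ × ℝ | p.2 / p.1 ≤ t} :=
    measurableSet_le (by fun_prop) measurable_const
  rw [← integral_indicator hs, integral_prod _ (hf.indicator hs)]
  refine integral_congr_ae (hμ.mono fun x hx ↦ ?_)
  dsimp only
  rw [← integral_indicator measurableSet_Iic]
  congr 1 with y
  simp only [indicator, mem_ofPred_eq, mem_Iic, div_le_iff₀ hx]

namespace Real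

lemma integrableOn_pow_mul_exp_neg_mul_Ioi (n : ℕ) {b : ℝ} (hb : 0 < b) :
    IntegrableOn (fun x ↦ x ^ n * exp (-(b * x))) (Ioi 0) := by
  refine (integrableOn_rpow_mul_exp_neg_mul_rpow (s := n) (by linarith [n.cast_nonneg (α := ℝ)])
    one_pos hb).congr_fun (fun x _ ↦ ?_) measurableSet_Ioi
  simp [rpow_natCast]

lemma integral_pow_mul_exp_neg_mul_Ioi (n : ℕ) {b : ℝ} (hb : 0 < b) :
    ∫ x in Ioi 0, x ^ n * exp (-(b * x)) = n ! / b ^ (n + 1) := by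
  have h := integral_rpow_mul_exp_neg_mul_Ioi (a := n + 1) (by positivity) hb
  rw [add_sub_cancel_right, Gamma_nat_eq_factorial, ← Nat.cast_add_one, rpow_natCast] at h
  simp_rw [rpow_natCast] at h
  rw [h, one_div_pow, one_div_mul_eq_div]

end Real

namespace ProbabilityTheory

lemma expMeasure_eq_withDensity (r : ℝ) :
    expMeasure r = (volume.restrict (Ioi 0)).withDensity
      fun x ↦ ENNReal.ofReal (r * exp (-(r * x))) := by
  have hpdf : exponentialPDF r =
      (Ici 0).indicator fun x ↦ ENNReal.ofReal (r * exp (-(r * x))) := by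
    ext x
    by_cases hx : 0 ≤ x <;> simp [exponentialPDF_eq, hx]
  rw [Measure.restrict_congr_set Ioi_ae_eq_Ici, ← withDensity_indicator measurableSet_Ici,
    ← hpdf]
  rfl

lemma ae_pos_expMeasure (r : ℝ) : ∀ᵐ x ∂expMeasure r, 0 < x := by
  rw [expMeasure_eq_withDensity]
  exact (withDensity_absolutelyContinuous _ _).ae_le (ae_restrict_mem measurableSet_Ioi)

lemma setIntegral_expMeasure {r : ℝ} (hr : 0 ≤ r) (g : ℝ → ℝ) {s : Set ℝ}
    (hs : MeasurableSet s) :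
    ∫ x in s, g x ∂expMeasure r = ∫ x in Ioi 0 ∩ s, r * exp (-(r * x)) * g x := by
  rw [expMeasure_eq_withDensity, restrict_withDensity hs, Measure.restrict_restrict hs, inter_comm,
    integral_withDensity_eq_integral_toReal_smul (by fun_prop)
      (ae_of_all _ fun _ ↦ ENNReal.ofReal_lt_top)]
  refine setIntegral_congr_fun (measurableSet_Ioi.inter hs) fun x _ ↦ ?_
  rw [ENNReal.toReal_ofReal (by positivity), smul_eq_mul]

lemma integral_expMeasure {r : ℝ} (hr : 0 ≤ r) (g : ℝ → ℝ) :
    ∫ x, g x ∂expMeasure r = ∫ x in Ioi 0, r * exp (-(r * x)) * g x := by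
  simpa using setIntegral_expMeasure hr g MeasurableSet.univ

lemma integrable_expMeasure_iff {r : ℝ} (hr : 0 ≤ r) {g : ℝ → ℝ} :
    Integrable g (expMeasure r) ↔ IntegrableOn (fun x ↦ r * exp (-(r * x)) * g x) (Ioi 0) := by
  rw [expMeasure_eq_withDensity, integrable_withDensity_iff_integrable_smul' (by fun_prop)
      (ae_of_all _ fun _ ↦ ENNReal.ofReal_lt_top)]
  refine integrable_congr (ae_of_all _ fun x ↦ ?_)
  simp only [ENNReal.toReal_ofReal (by positivity : 0 ≤ r * exp (-(r * x))), smul_eq_mul]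

lemma integrable_pow_mul_exp_neg_mul_expMeasure (n : ℕ) {r s : ℝ} (hr : 0 ≤ r)
    (hrs : 0 < r + s) : Integrable (fun x ↦ x ^ n * exp (-(s * x))) (expMeasure r) := by
  rw [integrable_expMeasure_iff hr]
  have h : IntegrableOn (fun x ↦ r * (x ^ n * exp (-((r + s) * x)))) (Ioi 0) :=
    (integrableOn_pow_mul_exp_neg_mul_Ioi n hrs).const_mul r
  refine h.congr_fun (fun x _ ↦ ?_) measurableSet_Ioi
  simp only [add_mul, neg_add, exp_add]
  ring

lemma integrable_id_expMeasure {r : ℝ} (hr : 0 < r) :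
    Integrable (fun x ↦ x) (expMeasure r) := by
  simpa using integrable_pow_mul_exp_neg_mul_expMeasure 1 hr.le (s := 0) (by simpa)

lemma integral_pow_mul_exp_neg_mul_expMeasure (n : ℕ) {r s : ℝ} (hr : 0 ≤ r)
    (hrs : 0 < r + s) :
    ∫ x, x ^ n * exp (-(s * x)) ∂expMeasure r = r * n ! / (r + s) ^ (n + 1) := by
  rw [integral_expMeasure hr, mul_div_assoc, ← integral_pow_mul_exp_neg_mul_Ioi n hrs,
    ← integral_const_mul]
  refine setIntegral_congr_fun measurableSet_Ioi fun x _ ↦ ?_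
  rw [add_mul, neg_add, exp_add]
  ring

lemma measureReal_Iic_expMeasure {r c : ℝ} (hr : 0 < r) (hc : 0 ≤ c) :
    (expMeasure r).real (Iic c) = 1 - exp (-(r * c)) := by
  have := isProbabilityMeasure_expMeasure hr
  have h := cdf_expMeasure_eq hr c
  rwa [cdf_eq_real, if_pos hc] at h

lemma setIntegral_Iic_id_expMeasure {r c : ℝ} (hr : 0 < r) (hc : 0 ≤ c) :
    ∫ x in Iic c, x ∂expMeasure r = 1 / r - (c + 1 / r) * exp (-(r * c)) := by
  rw [setIntegral_expMeasure hr.le _ measurableSet_Iic, Ioi_inter_Iic,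
    ← intervalIntegral.integral_of_le hc]
  have hderiv : ∀ x, HasDerivAt (fun x ↦ (x + 1 / r) * -exp (-(r * x)))
      (r * exp (-(r * x)) * x) x := fun x ↦
    (((hasDerivAt_id' x).add_const (1 / r)).mul hasDerivAt_neg_exp_mul_exp).congr_deriv
      (by field_simp; ring)
  rw [intervalIntegral.integral_eq_sub_of_hasDerivAt (fun x _ ↦ hderiv x)
    ((by fun_prop : Continuous fun x ↦ r * exp (-(r * x)) * x).intervalIntegrable _ _)]
  simp only [mul_zero, neg_zero, exp_zero]
  ring

end ProbabilityTheory

lemma setIntegral_fst_div_le_expMeasure_prod {t : ℝ} (ht : 0 ≤ t) :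
    ∫ p in {p : ℝ × ℝ | p.2 / p.1 ≤ t}, p.1 ∂(expMeasure 1).prod (expMeasure 1) =
      1 - 1 / (1 + t) ^ 2 := by
  have := isProbabilityMeasure_expMeasure one_pos
  have h1t : 0 < 1 + t := by linarith
  have hmoment (n : ℕ) {s : ℝ} (hs : 0 < 1 + s) :=
    integrable_pow_mul_exp_neg_mul_expMeasure n zero_le_one hs
  have hinner : ∀ᵐ x ∂expMeasure 1, ∫ _ in Iic (t * x), x ∂expMeasure 1 =
      x ^ 1 * exp (-(0 * x)) - x ^ 1 * exp (-(t * x)) :=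
    (ae_pos_expMeasure 1).mono fun x hx ↦ by
      rw [setIntegral_const, measureReal_Iic_expMeasure one_pos (by positivity)]
      simp only [smul_eq_mul, one_mul, zero_mul, neg_zero, exp_zero]
      ring
  rw [setIntegral_div_le_eq_integral_setIntegral_Iic
      ((integrable_id_expMeasure one_pos).comp_fst _) (ae_pos_expMeasure 1),
    integral_congr_ae hinner,
    integral_sub (hmoment 1 (by simp)) (hmoment 1 h1t),
    integral_pow_mul_exp_neg_mul_expMeasure 1 zero_le_one (by simp),
    integral_pow_mul_exp_neg_mul_expMeasure 1 zero_le_one h1t]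
  norm_num

lemma setIntegral_snd_div_le_expMeasure_prod {t : ℝ} (ht : 0 ≤ t) :
    ∫ p in {p : ℝ × ℝ | p.2 / p.1 ≤ t}, p.2 ∂(expMeasure 1).prod (expMeasure 1) =
      t ^ 2 / (1 + t) ^ 2 := by
  have := isProbabilityMeasure_expMeasure one_pos
  have h1t : 0 < 1 + t := by linarith
  have hmoment (n : ℕ) {s : ℝ} (hs : 0 < 1 + s) :=
    integrable_pow_mul_exp_neg_mul_expMeasure n zero_le_one hs
  have hinner : ∀ᵐ x ∂expMeasure 1, ∫ y in Iic (t * x), y ∂expMeasure 1 =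
      x ^ 0 * exp (-(0 * x)) - x ^ 0 * exp (-(t * x)) - t * (x ^ 1 * exp (-(t * x))) :=
    (ae_pos_expMeasure 1).mono fun x hx ↦ by
      rw [setIntegral_Iic_id_expMeasure one_pos (by positivity)]
      simp only [div_one, one_mul, pow_zero, pow_one, zero_mul, neg_zero, exp_zero]
      ring
  rw [setIntegral_div_le_eq_integral_setIntegral_Iic
      ((integrable_id_expMeasure one_pos).comp_snd _) (ae_pos_expMeasure 1),
    integral_congr_ae hinner,
    integral_sub (by exact (hmoment 0 (by simp)).sub (hmoment 0 h1t))
      ((hmoment 1 h1t).const_mul t),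
    integral_sub (hmoment 0 (by simp)) (hmoment 0 h1t), integral_const_mul,
    integral_pow_mul_exp_neg_mul_expMeasure 0 zero_le_one (by simp),
    integral_pow_mul_exp_neg_mul_expMeasure 0 zero_le_one h1t,
    integral_pow_mul_exp_neg_mul_expMeasure 1 zero_le_one h1t]
  field_simp
  ring

/-- For `ζ, ξ` i.i.d. exponential of mean 1 and `t ≥ 0`,
`E[ζ·1{ξ/ζ ≤ t}] = 1 - 1/(1+t)²` and `E[ξ·1{ξ/ζ ≤ t}] = t²/(1+t)²`. -/
theorem expectation_on_slope_event (t : ℝ) (ht : 0 ≤ t) :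
    (∫ p in {p : ℝ × ℝ | p.2 / p.1 ≤ t}, p.1 ∂(expMeasure 1).prod (expMeasure 1)) =
        1 - 1 / (1 + t) ^ 2 ∧
    (∫ p in {p : ℝ × ℝ | p.2 / p.1 ≤ t}, p.2 ∂(expMeasure 1).prod (expMeasure 1)) =
        t ^ 2 / (1 + t) ^ 2 :=
  ⟨setIntegral_fst_div_le_expMeasure_prod ht, setIntegral_snd_div_le_expMeasure_prod ht⟩
end
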